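/- Let ξ ∈ ℂ with −π/h < Re ξ ≤ π/h, Im ξ ≤ 0, ξ ≠ 0, and let ω ∈ ℝ with ω ≠ 0 be such that the mode u_j(t) = e^{−iωt} e^{iξhj} satisfies the semi-discrete wave equation d²u_j/dt²(t) = (L_p u(t))_j for all t ∈ ℝ and j ∈ ℤ (equivalently, (L_p w)_j = −ω² w_j for w_j = e^{iξhj}). Assume 2 + i(σ_m/ω)(1 − e^{iξh}) ≠ 0 for all m ≥ 0. Define U_{j,k}(t) = e^{−iωt} W_{j,k}, where W_{j,k} = (Π_{m=0}^{k−1} ρ(σ_m, ξ, ω)) e^{i(j+k)ξh} for k ≥ 0 and W_{j,k} = e^{i(j+k)ξh} for k < 0. Then: (i) for every t, the function (j,k) ↦ U_{j,k}(t) is discrete holomorphic with respect to Z; (ii) U_{j,0}(t) = u_j(t) for all j and t; (iii) d²U_{j,k}/dt²(t) = (L_p U_{·,k}(t))_j for all j, k, t; and (iv) the restriction to the stretching path satisfies U_{0,j}(t) = A(j) u_j(t) for all j ∈ ℤ and t ∈ ℝ, where A(j) = 1 for j ≤ 0 and A(j) = Π_{l=0}^{j−1} ρ(σ_l, ξ,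 ω) for j > 0. -/

import Mathlib

/-- The discrete complex stretching grid
`Z_{j,k} = (j+k)h + i(h/ω) Σ_{ℓ=0}^{k-1} σ_ℓ` (the sum being 0 for `k ≤ 0`). -/
noncomputable def Zmap (h ω : ℝ) (σ : ℤ → ℝ) (j k : ℤ) : ℂ :=
  ((j + k : ℤ) : ℂ) * (h : ℂ) +
    Complex.I * ((h : ℂ) / (ω : ℂ)) * ∑ l ∈ Finset.range k.toNat, ((σ l : ℝ) : ℂ)

/-- Discrete holomorphicity with respect to the grid `Zmap h ω σ`: the discrete
Cauchy–Riemann equations hold on every face. -/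
def DiscreteHolo (h ω : ℝ) (σ : ℤ → ℝ) (F : ℤ → ℤ → ℂ) : Prop :=
  ∀ j k : ℤ,
    (F (j + 1) (k + 1) - F j k) * (Zmap h ω σ j (k + 1) - Zmap h ω σ (j + 1) k) =
    (F j (k + 1) - F (j + 1) k) * (Zmap h ω σ (j + 1) (k + 1) - Zmap h ω σ j k)

/-- The attenuation factor
`ρ(σ, ξ, ω) = (2 + i(σ/ω)(1 − e^{−iξh})) / (2 + i(σ/ω)(1 − e^{iξh}))`. -/
noncomputable def rho (σ : ℝ) (ξ : ℂ) (ω h : ℝ) : ℂ :=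
  (2 + Complex.I * ((σ : ℂ) / (ω : ℂ)) * (1 - Complex.exp (-(Complex.I * ξ * (h : ℂ))))) /
  (2 + Complex.I * ((σ : ℂ) / (ω : ℂ)) * (1 - Complex.exp (Complex.I * ξ * (h : ℂ))))

/-- The discrete-holomorphic extension `W` of the mode `w_j = e^{i j ξ h}`:
`W_{j,k} = (Π_{m=0}^{k−1} ρ(σ_m, ξ, ω)) e^{i(j+k)ξh}` for `k ≥ 0`, and
`W_{j,k} = e^{i(j+k)ξh}` for `k < 0`. -/
noncomputable def Wext (h ω : ℝ) (σ : ℤ → ℝ) (ξ : ℂ) (j k : ℤ) : ℂ :=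
  if 0 ≤ k then
    (∏ m ∈ Finset.range k.toNat, rho (σ m) ξ ω h) *
      Complex.exp (Complex.I * ((j + k : ℤ) : ℂ) * ξ * (h : ℂ))
  else
    Complex.exp (Complex.I * ((j + k : ℤ) : ℂ) * ξ * (h : ℂ))

/-- The amplitude factor `A(j)`: `1` for `j ≤ 0` and `Π_{l=0}^{j−1} ρ(σ_l, ξ, ω)` for `j > 0`. -/
noncomputable def Afac (h ω : ℝ) (σ : ℤ → ℝ) (ξ : ℂ) (j : ℤ) : ℂ :=
  if j ≤ 0 then 1 else ∏ l ∈ Finset.range j.toNat, rho (σ l) ξ ω h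

/-- The time-dependent extension `U_{j,k}(t) = e^{−iωt} W_{j,k}`. -/
noncomputable def Uext (h ω : ℝ) (σ : ℤ → ℝ) (ξ : ℂ) (j k : ℤ) (t : ℝ) : ℂ :=
  Complex.exp (-(Complex.I * (ω : ℂ) * (t : ℂ))) * Wext h ω σ ξ j k

/-!
Since `σ_k = 0` for `k < 0` and `ρ(0, ξ, ω) = 1`, the extension is uniformly
`W_{j,k} = P_k E^{j+k}` with `E = e^{iξh}` and `P_{k+1} = ρ(σ_k, ξ, ω) P_k`.
On the face `(j,k)` the grid differences are `Z_{j,k+1} − Z_{j+1,k} = h s` and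
`Z_{j+1,k+1} − Z_{j,k} = 2h + h s` with `s = iσ_k/ω`, so after dividing by `P_k E^{j+k}` the
discrete Cauchy–Riemann equation becomes `(ρ E² − 1) h s = (ρ − 1) E (2h + h s)`, which is
exactly how `ρ` was chosen. The time factor `e^{−iωt}` turns the dispersion relation of the
mode into the semi-discrete wave equation for every column.
-/

open Complex Finset

section Grid

variable {h ω : ℝ} {σ : ℤ → ℝ}

lemma Zmap_succ_left (j k : ℤ) : Zmap h ω σ (j + 1) k = Zmap h ω σ j k + h := by
  unfold Zmap
  push_cast
  ring

lemma Zmap_succ_right (hσneg : ∀ j : ℤ, j < 0 → σ j = 0) (j k : ℤ) :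
    Zmap h ω σ j (k + 1) = Zmap h ω σ j k + h + h * (I * (σ k / ω)) := by
  unfold Zmap
  rcases le_or_gt 0 k with hk | hk
  · rw [show (k + 1).toNat = k.toNat + 1 by omega, sum_range_succ, Int.toNat_of_nonneg hk]
    push_cast
    ring
  · rw [show (k + 1).toNat = 0 by omega, show k.toNat = 0 by omega, hσneg k hk]
    push_cast
    ring

lemma DiscreteHolo.const_mul {F : ℤ → ℤ → ℂ} (hF : DiscreteHolo h ω σ F) (c : ℂ) :
    DiscreteHolo h ω σ (fun j k => c * F j k) := by
  intro j k
  simp only [← mul_sub, mul_assoc, hF j k]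

end Grid

lemma prod_range_toNat_succ {M : Type*} [CommMonoid M] (f : ℤ → M)
    (hf : ∀ k < 0, f k = 1) (k : ℤ) :
    ∏ m ∈ range (k + 1).toNat, f m = (∏ m ∈ range k.toNat, f m) * f k := by
  rcases le_or_gt 0 k with hk | hk
  · rw [show (k + 1).toNat = k.toNat + 1 by omega, prod_range_succ, Int.toNat_of_nonneg hk]
  · rw [show (k + 1).toNat = 0 by omega, show k.toNat = 0 by omega, hf k hk, mul_one]

lemma cexp_mode_succ (n : ℤ) (ξ : ℂ) (h : ℝ) :
    cexp (I * ((n + 1 : ℤ) : ℂ) * ξ * h) = cexp (I * (n : ℂ) * ξ * h) * cexp (I * ξ * h) := by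
  rw [← Complex.exp_add]
  push_cast
  ring_nf

section Rho

variable {ξ : ℂ} {ω h : ℝ}

@[simp]
lemma rho_zero : rho 0 ξ ω h = 1 := by
  simp [rho]

lemma rho_discrete_cauchy_riemann {σ : ℝ}
    (hd : 2 + I * (σ / ω) * (1 - cexp (I * ξ * h)) ≠ 0) :
    (rho σ ξ ω h * cexp (I * ξ * h) ^ 2 - 1) * (h * (I * (σ / ω))) =
      (rho σ ξ ω h * cexp (I * ξ * h) - cexp (I * ξ * h)) *
        (2 * h + h * (I * (σ / ω))) := by
  have hE : cexp (I * ξ * h) ≠ 0 := Complex.exp_ne_zero _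
  rw [rho, Complex.exp_neg]
  generalize cexp (I * ξ * h) = E at hE hd ⊢
  generalize I * (σ / ω) = s at hd ⊢
  field_simp
  ring

end Rho

section Extension

variable {h ω : ℝ} {σ : ℤ → ℝ} {ξ : ℂ}

lemma Wext_eq (j k : ℤ) :
    Wext h ω σ ξ j k =
      (∏ m ∈ range k.toNat, rho (σ m) ξ ω h) * cexp (I * ((j + k : ℤ) : ℂ) * ξ * h) := by
  unfold Wext
  split_ifs with hk
  · rfl
  · rw [Int.toNat_of_nonpos (by omega), range_zero, prod_empty, one_mul]

lemma Afac_eq (j : ℤ) : Afac h ω σ ξ j = ∏ l ∈ range j.toNat, rho (σ l) ξ ω h := by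
  unfold Afac
  split_ifs with hj
  · rw [Int.toNat_of_nonpos hj, range_zero, prod_empty]
  · rfl

theorem discreteHolo_Wext (hσneg : ∀ j : ℤ, j < 0 → σ j = 0)
    (hden : ∀ m : ℤ, 0 ≤ m → 2 + I * (σ m / ω) * (1 - cexp (I * ξ * h)) ≠ 0) :
    DiscreteHolo h ω σ (Wext h ω σ ξ) := by
  intro j k
  have hd : 2 + I * (σ k / ω) * (1 - cexp (I * ξ * h)) ≠ 0 := by
    rcases le_or_gt 0 k with hk | hk
    · exact hden k hk
    · simp [hσneg k hk]
  have hprod := prod_range_toNat_succ (fun m => rho (σ m) ξ ω h)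
    (fun m hm => by simp [hσneg m hm]) k
  have hdiag : Zmap h ω σ (j + 1) (k + 1) - Zmap h ω σ j k = 2 * h + h * (I * (σ k / ω)) := by
    rw [Zmap_succ_right hσneg, Zmap_succ_left]
    ring
  have hanti : Zmap h ω σ j (k + 1) - Zmap h ω σ (j + 1) k = h * (I * (σ k / ω)) := by
    rw [Zmap_succ_right hσneg, Zmap_succ_left]
    ring
  simp only [Wext_eq, hprod, hdiag, hanti]
  rw [show j + 1 + (k + 1) = j + k + 1 + 1 by ring, show j + (k + 1) = j + k + 1 by ring,
    show j + 1 + k = j + k + 1 by ring, cexp_mode_succ, cexp_mode_succ]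
  linear_combination (∏ m ∈ range k.toNat, rho (σ m) ξ ω h) *
    cexp (I * ((j + k : ℤ) : ℂ) * ξ * h) * rho_discrete_cauchy_riemann hd

end Extension

lemma deriv_cexp_neg_mul (z W : ℂ) :
    deriv (fun s : ℝ => cexp (-(z * s)) * W) = fun s : ℝ => -z * (cexp (-(z * s)) * W) := by
  funext t
  have hlin : HasDerivAt (fun s : ℝ => -(z * s)) (-z) t := by
    simpa [Pi.neg_def] using ((Complex.ofRealCLM.hasDerivAt (x := t)).const_mul z).neg
  exact ((hlin.cexp.mul_const W).congr_deriv (by ring)).deriv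

lemma deriv_deriv_cexp_neg_mul (z W : ℂ) (t : ℝ) :
    deriv (deriv (fun s : ℝ => cexp (-(z * s)) * W)) t = z ^ 2 * (cexp (-(z * t)) * W) := by
  have hfirst : deriv (fun s : ℝ => cexp (-(z * s)) * W) =
      fun s : ℝ => cexp (-(z * s)) * (-z * W) := by
    rw [deriv_cexp_neg_mul]
    ext s
    ring
  rw [hfirst, deriv_cexp_neg_mul]
  ring

theorem stmt10_general (p : ℕ) (h : ℝ)
    (a : ℤ → ℝ)
    (ω : ℝ)
    (σ : ℤ → ℝ) (hσneg : ∀ j : ℤ, j < 0 → σ j = 0)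
    (ξ : ℂ)
    (hmode : ∀ j : ℤ, (∑ r ∈ Finset.Icc (-(p : ℤ)) (p : ℤ),
        (a r : ℂ) * Complex.exp (Complex.I * ((j + r : ℤ) : ℂ) * ξ * (h : ℂ))) =
        -((ω : ℂ)) ^ 2 * Complex.exp (Complex.I * (j : ℂ) * ξ * (h : ℂ)))
    (hden : ∀ m : ℤ, 0 ≤ m →
        2 + Complex.I * ((σ m : ℂ) / (ω : ℂ)) * (1 - Complex.exp (Complex.I * ξ * (h : ℂ))) ≠ 0) :
    (∀ t : ℝ, DiscreteHolo h ω σ (fun j k => Uext h ω σ ξ j k t)) ∧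
    (∀ j : ℤ, ∀ t : ℝ, Uext h ω σ ξ j 0 t =
        Complex.exp (-(Complex.I * (ω : ℂ) * (t : ℂ))) *
          Complex.exp (Complex.I * (j : ℂ) * ξ * (h : ℂ))) ∧
    (∀ j k : ℤ, ∀ t : ℝ, deriv (deriv (fun s : ℝ => Uext h ω σ ξ j k s)) t =
        ∑ r ∈ Finset.Icc (-(p : ℤ)) (p : ℤ), (a r : ℂ) * Uext h ω σ ξ (j + r) k t) ∧
    (∀ j : ℤ, ∀ t : ℝ, Uext h ω σ ξ 0 j t =
        Afac h ω σ ξ j *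
          (Complex.exp (-(Complex.I * (ω : ℂ) * (t : ℂ))) *
            Complex.exp (Complex.I * (j : ℂ) * ξ * (h : ℂ)))) := by
  refine ⟨fun t => (discreteHolo_Wext hσneg hden).const_mul _, fun j t => ?_, fun j k t => ?_,
    fun j t => ?_⟩
  · simp [Uext, Wext_eq]
  · have hcolumn : ∑ r ∈ Icc (-(p : ℤ)) p, (a r : ℂ) * Uext h ω σ ξ (j + r) k t =
        cexp (-(I * ω * t)) * (∏ m ∈ range k.toNat, rho (σ m) ξ ω h) *
          ∑ r ∈ Icc (-(p : ℤ)) p, (a r : ℂ) * cexp (I * ((j + k + r : ℤ) : ℂ) * ξ * h) := by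
      rw [mul_sum]
      refine sum_congr rfl fun r _ => ?_
      rw [Uext, Wext_eq, show j + r + k = j + k + r by ring]
      ring
    rw [hcolumn, hmode]
    simp only [Uext]
    rw [deriv_deriv_cexp_neg_mul, Wext_eq, mul_pow, I_sq]
    ring
  · simp only [Uext, Wext_eq, zero_add, Afac_eq]
    ring

/-- the right-traveling mode `u_j(t) = e^{−iωt} e^{iξhj}` solving the
semi-discrete wave equation extends to the discrete holomorphic function
`U_{j,k}(t) = e^{−iωt} W_{j,k}`, whose columns solve the semi-discrete wave equation
and whose restriction to the stretching path is `U_{0,j}(t) = A(j) u_j(t)`. -/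
theorem stmt10 (p : ℕ) (hp : 1 ≤ p) (h : ℝ) (hh : 0 < h)
    (a : ℤ → ℝ) (hsym : ∀ r : ℤ, a (-r) = a r)
    (ω : ℝ) (hω : ω ≠ 0)
    (σ : ℤ → ℝ) (hσ : ∀ j : ℤ, 0 ≤ σ j) (hσneg : ∀ j : ℤ, j < 0 → σ j = 0)
    (ξ : ℂ) (hξ1 : -(Real.pi / h) < ξ.re) (hξ2 : ξ.re ≤ Real.pi / h)
    (hξ3 : ξ.im ≤ 0) (hξ4 : ξ ≠ 0)
    (hmode : ∀ j : ℤ, (∑ r ∈ Finset.Icc (-(p : ℤ)) (p : ℤ),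
        (a r : ℂ) * Complex.exp (Complex.I * ((j + r : ℤ) : ℂ) * ξ * (h : ℂ))) =
        -((ω : ℂ)) ^ 2 * Complex.exp (Complex.I * (j : ℂ) * ξ * (h : ℂ)))
    (hden : ∀ m : ℤ, 0 ≤ m →
        2 + Complex.I * ((σ m : ℂ) / (ω : ℂ)) * (1 - Complex.exp (Complex.I * ξ * (h : ℂ))) ≠ 0) :
    (∀ t : ℝ, DiscreteHolo h ω σ (fun j k => Uext h ω σ ξ j k t)) ∧
    (∀ j : ℤ, ∀ t : ℝ, Uext h ω σ ξ j 0 t =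
        Complex.exp (-(Complex.I * (ω : ℂ) * (t : ℂ))) *
          Complex.exp (Complex.I * (j : ℂ) * ξ * (h : ℂ))) ∧
    (∀ j k : ℤ, ∀ t : ℝ, deriv (deriv (fun s : ℝ => Uext h ω σ ξ j k s)) t =
        ∑ r ∈ Finset.Icc (-(p : ℤ)) (p : ℤ), (a r : ℂ) * Uext h ω σ ξ (j + r) k t) ∧
    (∀ j : ℤ, ∀ t : ℝ, Uext h ω σ ξ 0 j t =
        Afac h ω σ ξ j *
          (Complex.exp (-(Complex.I * (ω : ℂ) * (t : ℂ))) *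
            Complex.exp (Complex.I * (j : ℂ) * ξ * (h : ℂ)))) :=
  stmt10_general p h a ω σ hσneg ξ hmode hden
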